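/- arXiv:1304.6926 — 2 statements merged into one kernel-verified Lean document; each statement's English description precedes it below -/
import Mathlib

section
/- Let p ≥ 1, let t^0 < t^1 < ⋯ < t^p be distinct real nodes with Lagrange basis polynomials l_0, …, l_p and edge functions e_k = −∑_{j=0}^{k−1} l_j′ (1 ≤ k ≤ p), and let t̃^1, …, t̃^p be any p real points. Given real numbers y^0, y^1, …, y^p and a function h : ℝ × ℝ → ℝ, set y_h(t) = ∑_{k=0}^{p} y^k l_k(t). Then the mimetic integrator equations ∑_{k=1}^{p} (y^k − y^{k−1}) e_k(t̃^q) = h(y_h(t̃^q), t̃^q) for q = 1, …, p hold if and only if y_h is a collocation solution at the points t̃^q, i.e., y_h′(t̃^q) = h(y_h(t̃^q), t̃^q) for q = 1, …, p. -/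
/-!
The Lagrange basis is a partition of unity, `∑ l_j = 1`, so `∑ l_j' = 0`. Summation by parts
turns `∑_k (y^k - y^{k-1}) e_k(s)` into `∑_k y^k l_k'(s) - y^p ∑_j l_j'(s) = y_h'(s)` for every
`s`, so the two systems of equations coincide.
-/

open Finset Polynomial

theorem Polynomial.sum_eq_one_of_eval_eq_ite {R ι : Type*} [Field R] [DecidableEq ι]
    {s : Finset ι} (hs : s.Nonempty) {v : ι → R} (hvs : Set.InjOn v s) {l : ι → R[X]}
    (hdeg : ∀ i ∈ s, (l i).degree < #s)
    (hl : ∀ i ∈ s, ∀ j ∈ s, (l i).eval (v j) = if i = j then 1 else 0) :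
    ∑ i ∈ s, l i = 1 := by
  refine eq_of_degrees_lt_of_eval_index_eq s hvs
    ((degree_sum_le s l).trans_lt ((Finset.sup_lt_iff (WithBot.bot_lt_coe _)).2 hdeg)) ?_ ?_
  · simpa using hs.card_pos
  · intro j hj
    simp [eval_finsetSum, Finset.sum_congr rfl fun i hi => hl i hi j hj, hj]

theorem Finset.sum_Icc_sub_mul_neg_sum_range {R : Type*} [CommRing R] (n : ℕ) (Y d : ℕ → R) :
    ∑ k ∈ Icc 1 n, (Y k - Y (k - 1)) * -∑ j ∈ range k, d j =
      ∑ k ∈ range (n + 1), Y k * d k - Y n * ∑ k ∈ range (n + 1), d k := by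
  induction n with
  | zero => simp
  | succ n ih =>
    rw [sum_Icc_succ_top (by omega), ih, add_tsub_cancel_right]
    simp only [sum_range_succ]
    ring

theorem deriv_sum_mul_eval {𝕜 ι : Type*} [NontriviallyNormedField 𝕜] (s : Finset ι)
    (y : ι → 𝕜) (l : ι → 𝕜[X]) (x : 𝕜) :
    deriv (fun x => ∑ k ∈ s, y k * (l k).eval x) x = ∑ k ∈ s, y k * (derivative (l k)).eval x :=
  (HasDerivAt.fun_sum fun k _ => ((l k).hasDerivAt x).const_mul (y k)).deriv

theorem mimetic_integrator_iff_collocation_general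
    (p : ℕ) (t : ℕ → ℝ)
    (ht : ∀ i j, i < j → j ≤ p → t i < t j)
    (l : ℕ → Polynomial ℝ)
    (hdeg : ∀ i, i ≤ p → (l i).natDegree ≤ p)
    (hl : ∀ i, i ≤ p → ∀ j, j ≤ p → (l i).eval (t j) = if i = j then 1 else 0)
    (e : ℕ → Polynomial ℝ)
    (he : ∀ k, 1 ≤ k → k ≤ p →
      e k = -∑ j ∈ Finset.range k, Polynomial.derivative (l j))
    (ttil : ℕ → ℝ) (y : ℕ → ℝ) (h : ℝ → ℝ → ℝ) :
    (∀ q, 1 ≤ q → q ≤ p →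
        ∑ k ∈ Finset.Icc 1 p, (y k - y (k - 1)) * (e k).eval (ttil q) =
          h (∑ k ∈ Finset.range (p + 1), y k * (l k).eval (ttil q)) (ttil q)) ↔
      (∀ q, 1 ≤ q → q ≤ p →
        deriv (fun s => ∑ k ∈ Finset.range (p + 1), y k * (l k).eval s) (ttil q) =
          h (∑ k ∈ Finset.range (p + 1), y k * (l k).eval (ttil q)) (ttil q)) := by
  have hmono : StrictMonoOn t (range (p + 1) : Set ℕ) := fun i _ j hj hij =>
    ht i j hij (mem_range_succ_iff.mp hj)
  have hsum : ∑ j ∈ range (p + 1), l j = 1 :=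
    sum_eq_one_of_eval_eq_ite ⟨0, by simp⟩ hmono.injOn
      (fun i hi => (degree_le_of_natDegree_le (hdeg i (mem_range_succ_iff.mp hi))).trans_lt
        (by rw [card_range]; exact_mod_cast p.lt_succ_self))
      (fun i hi j hj => hl i (mem_range_succ_iff.mp hi) j (mem_range_succ_iff.mp hj))
  have hsum_deriv (s : ℝ) : ∑ j ∈ range (p + 1), (derivative (l j)).eval s = 0 := by
    simpa [← eval_finsetSum, ← map_sum] using congrArg (fun f => (derivative f).eval s) hsum
  have key (s : ℝ) : ∑ k ∈ Icc 1 p, (y k - y (k - 1)) * (e k).eval s =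
      deriv (fun s => ∑ k ∈ range (p + 1), y k * (l k).eval s) s := by
    have he_eval : ∀ k ∈ Icc 1 p,
        (e k).eval s = -∑ j ∈ range k, (derivative (l j)).eval s := fun k hk => by
      rw [he k (mem_Icc.mp hk).1 (mem_Icc.mp hk).2, eval_neg, eval_finsetSum]
    rw [sum_congr rfl fun k hk => by rw [he_eval k hk], sum_Icc_sub_mul_neg_sum_range,
      hsum_deriv, mul_zero, sub_zero, deriv_sum_mul_eval]
  simp only [key]

/-- The mimetic time integrator equations
`∑_k (y^k - y^{k-1}) e_k(t̃^q) = h(y_h(t̃^q), t̃^q)` (q = 1,…,p) hold if and only if the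
interpolant `y_h(t) = ∑_k y^k l_k(t)` is a collocation solution at the points `t̃^q`. -/
theorem mimetic_integrator_iff_collocation
    (p : ℕ) (hp : 1 ≤ p) (t : ℕ → ℝ)
    (ht : ∀ i j, i < j → j ≤ p → t i < t j)
    (l : ℕ → Polynomial ℝ)
    (hdeg : ∀ i, i ≤ p → (l i).natDegree ≤ p)
    (hl : ∀ i, i ≤ p → ∀ j, j ≤ p → (l i).eval (t j) = if i = j then 1 else 0)
    (e : ℕ → Polynomial ℝ)
    (he : ∀ k, 1 ≤ k → k ≤ p →
      e k = -∑ j ∈ Finset.range k, Polynomial.derivative (l j))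
    (ttil : ℕ → ℝ) (y : ℕ → ℝ) (h : ℝ → ℝ → ℝ) :
    (∀ q, 1 ≤ q → q ≤ p →
        ∑ k ∈ Finset.Icc 1 p, (y k - y (k - 1)) * (e k).eval (ttil q) =
          h (∑ k ∈ Finset.range (p + 1), y k * (l k).eval (ttil q)) (ttil q)) ↔
      (∀ q, 1 ≤ q → q ≤ p →
        deriv (fun s => ∑ k ∈ Finset.range (p + 1), y k * (l k).eval s) (ttil q) =
          h (∑ k ∈ Finset.range (p + 1), y k * (l k).eval (ttil q)) (ttil q)) :=
  mimetic_integrator_iff_collocation_general p t ht l hdeg hl e he ttil y h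
end

section
/- Let p ≥ 1, let t^0 < ⋯ < t^p be distinct real nodes with Lagrange basis polynomials l_0, …, l_p and edge functions e_k = −∑_{j=0}^{k−1} l_j′ (1 ≤ k ≤ p), and let t̃^1, …, t̃^p be p pairwise distinct real points. Let N, M ≥ 1, let E be a real N × M matrix whose column sums all vanish (∑_{i=1}^{N} E_{il} = 0 for every l), and let ρ_i^k (1 ≤ i ≤ N, 0 ≤ k ≤ p) and ς_l^q (1 ≤ l ≤ M, 1 ≤ q ≤ p) be real numbers satisfying the discrete advection scheme ∑_{k=1}^{p} (ρ_i^k − ρ_i^{k−1}) e_k(t̃^q) = −∑_{l=1}^{M} E_{il} ς_l^q for all i and all q. Then total mass is conserved: ∑_{i=1}^{N} ρ_i^k = ∑_{i=1}^{N} ρ_i^0 for every k = 0, …, p. -/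
/-!
Summing the scheme over the cells kills the flux term, because the columns of `E` sum to
zero. The total masses `S k = ∑ i, ρ i k` therefore satisfy `∑ k, (S k - S (k-1)) e_k(t̃^q) = 0`
at the `p` distinct points `t̃^q`. By summation by parts this combination of edge functions is
`-R'` with `R = ∑_{j<p} (S p - S j) l_j`, a polynomial of degree `≤ p`. So `R'` has degree
`< p` and `p` roots, hence vanishes; `R` is constant, and evaluating it at the nodes gives
`S p - S j = R(t^j) = R(t^p) = 0`.
-/

open Finset Polynomial
open scoped Matrix

theorem Matrix.sum_mulVec_eq_zero_of_sum_col_eq_zero {m n R : Type*} [Fintype m] [Fintype n]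
    [NonUnitalNonAssocSemiring R] (E : Matrix m n R) (hE : ∀ j, ∑ i, E i j = 0) (v : n → R) :
    ∑ i, (E *ᵥ v) i = 0 := by
  simp only [Matrix.mulVec, dotProduct]
  rw [sum_comm]
  simp [← sum_mul, hE]

theorem sum_Icc_sub_smul_sum_range {R M : Type*} [Ring R] [AddCommGroup M] [Module R M]
    (S : ℕ → R) (a : ℕ → M) (p : ℕ) :
    ∑ k ∈ Icc 1 p, (S k - S (k - 1)) • ∑ j ∈ range k, a j =
      ∑ j ∈ range p, (S p - S j) • a j := by
  induction p with
  | zero => simp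
  | succ p ih =>
    rw [sum_Icc_succ_top (by omega), ih, Nat.add_sub_cancel, sum_range_succ a, smul_add,
      smul_sum, sum_range_succ, ← add_assoc, ← sum_add_distrib]
    simp only [← add_smul, sub_add_sub_cancel']

namespace Polynomial

theorem eq_zero_of_natDegree_lt_card_of_eval_eq_zero_of_injOn {R ι : Type*} [CommRing R]
    [IsDomain R] (P : R[X]) (s : Finset ι) (f : ι → R) (hf : Set.InjOn f s)
    (heval : ∀ i ∈ s, P.eval (f i) = 0) (hcard : P.natDegree < #s) : P = 0 := by
  classical
  exact eq_zero_of_natDegree_lt_card_of_eval_eq_zero' P (s.image f) (forall_mem_image.2 heval)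
    (by rwa [card_image_of_injOn hf])

variable {R : Type*} [CommRing R]

theorem eval_sum_smul_of_eval_eq_ite (l : ℕ → R[X]) (c : ℕ → R) (n i : ℕ) (x : R)
    (hl : ∀ j < n, (l j).eval x = if j = i then 1 else 0) :
    (∑ j ∈ range n, c j • l j).eval x = if i < n then c i else 0 := by
  rw [eval_finsetSum]
  calc ∑ j ∈ range n, (c j • l j).eval x = ∑ j ∈ range n, if j = i then c j else 0 :=
        sum_congr rfl fun j hj => by simp [hl j (mem_range.mp hj)]
    _ = if i < n then c i else 0 := by simp [sum_ite_eq']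

theorem natDegree_derivative_sum_smul_lt (c : ℕ → R) (l : ℕ → R[X]) {p : ℕ} (hp : 1 ≤ p)
    (hdeg : ∀ j < p, (l j).natDegree ≤ p) :
    (derivative (∑ j ∈ range p, c j • l j)).natDegree < p :=
  calc _ ≤ (∑ j ∈ range p, c j • l j).natDegree - 1 := natDegree_derivative_le _
    _ ≤ p - 1 := Nat.sub_le_sub_right (natDegree_sum_le_of_forall_le _ _ fun j hj =>
        (natDegree_smul_le _ _).trans (hdeg j (mem_range.mp hj))) 1
    _ < p := by omega

theorem sum_Icc_sub_smul_edge_eq_neg_derivative (S : ℕ → R) (l e : ℕ → R[X]) (p : ℕ)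
    (he : ∀ k, 1 ≤ k → k ≤ p → e k = -∑ j ∈ range k, derivative (l j)) :
    ∑ k ∈ Icc 1 p, (S k - S (k - 1)) • e k =
      -derivative (∑ j ∈ range p, (S p - S j) • l j) := by
  rw [map_sum]
  simp only [derivative_smul]
  rw [← sum_Icc_sub_smul_sum_range S, ← sum_neg_distrib]
  refine sum_congr rfl fun k hk => ?_
  rw [mem_Icc] at hk
  rw [he k hk.1 hk.2, smul_neg]

theorem eq_zero_of_derivative_sum_smul_lagrange_eq_zero [IsAddTorsionFree R] (t : ℕ → R)
    (l : ℕ → R[X]) (c : ℕ → R) {p : ℕ}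
    (hl : ∀ i < p, ∀ j ≤ p, (l i).eval (t j) = if i = j then 1 else 0)
    (h : derivative (∑ j ∈ range p, c j • l j) = 0) {j : ℕ} (hj : j < p) : c j = 0 := by
  have h_const (x : R) : (∑ j ∈ range p, c j • l j).eval x =
      (∑ j ∈ range p, c j • l j).coeff 0 := by
    rw [eq_C_of_derivative_eq_zero h, eval_C, coeff_C_zero]
  have h_at_j := eval_sum_smul_of_eval_eq_ite l c p j (t j) fun i hi => hl i hi j hj.le
  have h_at_p := eval_sum_smul_of_eval_eq_ite l c p p (t p) fun i hi => hl i hi p le_rfl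
  rw [h_const, if_pos hj] at h_at_j
  rw [h_const, if_neg (lt_irrefl p)] at h_at_p
  rw [← h_at_j, h_at_p]

end Polynomial

theorem mimetic_advection_mass_conservation_general
    (p : ℕ) (hp : 1 ≤ p) (t : ℕ → ℝ)
    (l : ℕ → Polynomial ℝ)
    (hdeg : ∀ i, i ≤ p → (l i).natDegree ≤ p)
    (hl : ∀ i, i ≤ p → ∀ j, j ≤ p → (l i).eval (t j) = if i = j then 1 else 0)
    (e : ℕ → Polynomial ℝ)
    (he : ∀ k, 1 ≤ k → k ≤ p →
      e k = -∑ j ∈ Finset.range k, Polynomial.derivative (l j))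
    (ttil : ℕ → ℝ)
    (httil : ∀ q q', 1 ≤ q → q ≤ p → 1 ≤ q' → q' ≤ p → ttil q = ttil q' → q = q')
    (N M : ℕ)
    (E : Matrix (Fin N) (Fin M) ℝ)
    (hE : ∀ lcol : Fin M, ∑ i : Fin N, E i lcol = 0)
    (ρ : Fin N → ℕ → ℝ) (ς : Fin M → ℕ → ℝ)
    (hscheme : ∀ (i : Fin N) (q : ℕ), 1 ≤ q → q ≤ p →
      ∑ k ∈ Finset.Icc 1 p, (ρ i k - ρ i (k - 1)) * (e k).eval (ttil q) =
        -∑ lcol : Fin M, E i lcol * ς lcol q) :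
    ∀ k, k ≤ p → ∑ i : Fin N, ρ i k = ∑ i : Fin N, ρ i 0 := by
  set S : ℕ → ℝ := fun k => ∑ i, ρ i k
  have h_total_scheme (q : ℕ) (hq : q ∈ Icc 1 p) :
      (∑ k ∈ Icc 1 p, (S k - S (k - 1)) • e k).eval (ttil q) = 0 := by
    rw [mem_Icc] at hq
    calc _ = -∑ i, (E *ᵥ fun lcol => ς lcol q) i := by
          simp only [eval_finsetSum, eval_smul, smul_eq_mul, S, ← sum_sub_distrib, sum_mul]
          rw [sum_comm, ← sum_neg_distrib]
          exact sum_congr rfl fun i _ => hscheme i q hq.1 hq.2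
      _ = 0 := by rw [Matrix.sum_mulVec_eq_zero_of_sum_col_eq_zero E hE, neg_zero]
  have h_derivative : derivative (∑ j ∈ range p, (S p - S j) • l j) = 0 := by
    refine eq_zero_of_natDegree_lt_card_of_eval_eq_zero_of_injOn _ (Icc 1 p) ttil
      (fun q hq q' hq' h => ?_) (fun q hq => ?_) ?_
    · simp only [coe_Icc, Set.mem_Icc] at hq hq'
      exact httil q q' hq.1 hq.2 hq'.1 hq'.2 h
    · rw [← neg_eq_zero, ← eval_neg, ← sum_Icc_sub_smul_edge_eq_neg_derivative S l e p he]
      exact h_total_scheme q hq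
    · rw [Nat.card_Icc, Nat.add_sub_cancel]
      exact natDegree_derivative_sum_smul_lt _ l hp fun j hj => hdeg j hj.le
  have hS (k : ℕ) (hk : k ≤ p) : S k = S p := by
    obtain hk | rfl := hk.lt_or_eq
    · have := eq_zero_of_derivative_sum_smul_lagrange_eq_zero t l _
        (fun i hi => hl i hi.le) h_derivative hk
      exact (sub_eq_zero.mp this).symm
    · rfl
  intro k hk
  exact (hS k hk).trans (hS 0 (Nat.zero_le p)).symm

/-- Mass conservation of the mimetic advection scheme. If the incidence
matrix `E` has vanishing column sums and the degrees of freedom satisfy the discrete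
advection scheme `∑_k (ρ_i^k - ρ_i^{k-1}) e_k(t̃^q) = -∑_l E_{il} ς_l^q` at `p` pairwise
distinct staggered time points `t̃^1, …, t̃^p`, then `∑_i ρ_i^k = ∑_i ρ_i^0` for all
`k = 0, …, p`. -/
theorem mimetic_advection_mass_conservation
    (p : ℕ) (hp : 1 ≤ p) (t : ℕ → ℝ)
    (ht : ∀ i j, i < j → j ≤ p → t i < t j)
    (l : ℕ → Polynomial ℝ)
    (hdeg : ∀ i, i ≤ p → (l i).natDegree ≤ p)
    (hl : ∀ i, i ≤ p → ∀ j, j ≤ p → (l i).eval (t j) = if i = j then 1 else 0)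
    (e : ℕ → Polynomial ℝ)
    (he : ∀ k, 1 ≤ k → k ≤ p →
      e k = -∑ j ∈ Finset.range k, Polynomial.derivative (l j))
    (ttil : ℕ → ℝ)
    (httil : ∀ q q', 1 ≤ q → q ≤ p → 1 ≤ q' → q' ≤ p → ttil q = ttil q' → q = q')
    (N M : ℕ) (hN : 1 ≤ N) (hM : 1 ≤ M)
    (E : Matrix (Fin N) (Fin M) ℝ)
    (hE : ∀ lcol : Fin M, ∑ i : Fin N, E i lcol = 0)
    (ρ : Fin N → ℕ → ℝ) (ς : Fin M → ℕ → ℝ)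
    (hscheme : ∀ (i : Fin N) (q : ℕ), 1 ≤ q → q ≤ p →
      ∑ k ∈ Finset.Icc 1 p, (ρ i k - ρ i (k - 1)) * (e k).eval (ttil q) =
        -∑ lcol : Fin M, E i lcol * ς lcol q) :
    ∀ k, k ≤ p → ∑ i : Fin N, ρ i k = ∑ i : Fin N, ρ i 0 :=
  mimetic_advection_mass_conservation_general p hp t l hdeg hl e he ttil httil N M E hE ρ ς hscheme
end
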